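/- arXiv:1809.08794 — 4 statements merged into one kernel-verified Lean document; each statement's English description precedes it below -/
import Mathlib

section
/- Let a, c be real numbers and ε > 1. Then, as λ → +∞, the ratio of Gamma functions G(λ) := Γ(c+λ)·Γ(1+a−c+(ε−1)λ)/Γ(a+ελ) is asymptotically equivalent to √(2πλ)·ε^{1/2−a−ελ}·(ε−1)^{1/2+a−c+(ε−1)λ}; that is, the quotient of the two sides tends to 1 as λ → +∞. -/
/-!
Stirling's formula for the real Gamma function, `log Γ x = ½ log 2π + (x - ½) log x - x + o(1)`,
follows from the factorial case: for `x = n + t` with `0 ≤ t ≤ 1`, log-convexity squeezes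
`log Γ x - log Γ n` between `t log (n - 1)` and `t log n`, which pins the remainder at `x` to the
one at `n` up to `O(1/n)`. For `x = α + y` we have `(x - ½) log x - x = (x - ½) log y - y + o(1)`
as `y → ∞`, because `(α + y - ½) log (1 + α / y) → α`. For the three Gamma factors of `G`, with
`y = λ, (ε - 1)λ, ελ`, these main terms combine exactly into the logarithm of
`√(2πλ) ε^(½-a-ελ) (ε-1)^(½+a-c+(ε-1)λ)`.
-/

open Real Filter

/-- G(λ) := Γ(c+λ)·Γ(1+a−c+(ε−1)λ)/Γ(a+ελ). -/
noncomputable def G (a c ε lam : ℝ) : ℝ :=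
  Real.Gamma (c + lam) * Real.Gamma (1 + a - c + (ε - 1) * lam) / Real.Gamma (a + ε * lam)

open Topology

noncomputable def stirlingRemainder (x : ℝ) : ℝ :=
  log (Gamma x) - (log (2 * π) / 2 + (x - 1 / 2) * log x - x)

noncomputable def shiftedStirlingRemainder (α y : ℝ) : ℝ :=
  log (Gamma (α + y)) - (log (2 * π) / 2 + (α + y - 1 / 2) * log y - y)

lemma log_Gamma_add_one {y : ℝ} (hy : 0 < y) :
    (log ∘ Gamma) (y + 1) = (log ∘ Gamma) y + log y := by
  rw [Function.comp_apply, Gamma_add_one hy.ne', log_mul hy.ne' (Gamma_pos_of_pos hy).ne',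
    add_comm, Function.comp_apply]

lemma stirlingRemainder_natCast {n : ℕ} (hn : n ≠ 0) :
    stirlingRemainder n = log (Stirling.stirlingSeq n / √π) := by
  obtain ⟨m, rfl⟩ := Nat.exists_eq_succ_of_ne_zero hn
  have hm : (0 : ℝ) < m + 1 := by positivity
  have hfac : (0 : ℝ) < m.factorial := by exact_mod_cast m.factorial_pos
  rw [log_div (Stirling.stirlingSeq'_pos m).ne' (by positivity), Stirling.log_stirlingSeq_formula,
    stirlingRemainder, Nat.cast_succ, Gamma_nat_eq_factorial, Nat.factorial_succ, Nat.cast_mul,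
    Nat.cast_succ, log_mul hm.ne' hfac.ne', log_mul two_ne_zero hm.ne',
    log_div hm.ne' (exp_pos 1).ne', log_exp, log_sqrt pi_pos.le, log_mul two_ne_zero pi_pos.ne']
  ring

lemma tendsto_stirlingRemainder_nat :
    Tendsto (fun n : ℕ => stirlingRemainder n) atTop (𝓝 0) := by
  have hπ : √π ≠ 0 := by positivity
  have h := (continuousAt_log (div_ne_zero hπ hπ)).tendsto.comp
    (Stirling.tendsto_stirlingSeq_sqrt_pi.div_const √π)
  rw [div_self hπ, log_one] at h
  refine h.congr' ?_
  filter_upwards [eventually_ne_atTop 0] with n hn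
  exact (stirlingRemainder_natCast hn).symm

lemma abs_mul_log_add_sub_log_sub_le {n t : ℝ} (hn : 1 ≤ n) (ht0 : 0 ≤ t) (ht1 : t ≤ 1) :
    |(n + t - 1 / 2) * (log (n + t) - log n) - t| ≤ 1 / (2 * n) := by
  have hx : 0 < n + t := by linarith
  have hlog_le : log (n + t) - log n ≤ t / n := by
    have := log_le_sub_one_of_pos (show 0 < (n + t) / n by positivity)
    rwa [log_div hx.ne' (by positivity), add_div, div_self (by positivity),
      add_sub_cancel_left] at this
  have hlog_ge : t / (n + t) ≤ log (n + t) - log n := by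
    have := one_sub_inv_le_log_of_pos (show 0 < (n + t) / n by positivity)
    rwa [log_div hx.ne' (by positivity), inv_div, one_sub_div hx.ne', add_sub_cancel_left] at this
  have hupper : (n + t - 1 / 2) * (t / n) - t ≤ 1 / (2 * n) := by
    rw [← sub_nonneg]
    field_simp
    nlinarith
  have hlower : -(1 / (2 * n)) ≤ (n + t - 1 / 2) * (t / (n + t)) - t := by
    rw [← sub_nonneg]
    field_simp
    nlinarith
  rw [abs_le]
  constructor
  · linarith [mul_le_mul_of_nonneg_left hlog_ge (by linarith : 0 ≤ n + t - 1 / 2)]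
  · linarith [mul_le_mul_of_nonneg_left hlog_le (by linarith : 0 ≤ n + t - 1 / 2)]

lemma abs_stirlingRemainder_add_sub_le {n : ℕ} (hn : 2 ≤ n) {t : ℝ} (ht0 : 0 ≤ t) (ht1 : t ≤ 1) :
    |stirlingRemainder (n + t) - stirlingRemainder n| ≤ 3 / n := by
  have hn₂ : (2 : ℝ) ≤ n := by exact_mod_cast hn
  have hlog := abs_le.1 (abs_mul_log_add_sub_log_sub_le (n := n) (by linarith) ht0 ht1)
  have hlog_pred : log n - log (n - 1) ≤ 2 / n := by
    have := log_le_sub_one_of_pos (show (0 : ℝ) < n / (n - 1) by bound)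
    rw [log_div (by positivity) (by linarith), div_sub_one (by linarith)] at this
    exact this.trans ((div_le_div_iff₀ (by linarith) (by positivity)).2 (by linarith))
  have hlog_pred_pos : 0 ≤ log n - log (n - 1) :=
    sub_nonneg.2 (log_le_log (by linarith) (by linarith))
  have ht_log_pred := mul_le_of_le_one_left hlog_pred_pos ht1
  have hΓ : t * log (n - 1) ≤ log (Gamma (n + t)) - log (Gamma n) ∧
      log (Gamma (n + t)) - log (Gamma n) ≤ t * log n := by
    rcases ht0.eq_or_lt with rfl | ht0
    · simp
    have hΓ_le := BohrMollerup.f_add_nat_le (n := n) convexOn_log_Gamma log_Gamma_add_one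
      (by omega) ht0 ht1
    have hΓ_ge := BohrMollerup.f_add_nat_ge convexOn_log_Gamma log_Gamma_add_one hn ht0
    simp only [Function.comp_apply] at hΓ_le hΓ_ge
    constructor <;> linarith
  have h_half : 1 / (2 * (n : ℝ)) ≤ 1 / n := by gcongr; linarith
  have h_three : (3 : ℝ) / n = 2 / n + 1 / n := by ring
  have h_two : (0 : ℝ) ≤ 2 / n := by positivity
  unfold stirlingRemainder
  rw [abs_le]
  constructor <;> linarith

lemma tendsto_stirlingRemainder : Tendsto stirlingRemainder atTop (𝓝 0) := by
  have hfloor : Tendsto (fun x : ℝ => ⌊x⌋₊) atTop atTop := tendsto_nat_floor_atTop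
  have hdiff : Tendsto (fun x => stirlingRemainder x - stirlingRemainder ⌊x⌋₊) atTop (𝓝 0) := by
    refine squeeze_zero_norm' ?_ ((tendsto_const_div_atTop_nhds_zero_nat 3).comp hfloor)
    filter_upwards [eventually_ge_atTop 2] with x hx
    have hfx := Nat.floor_le (zero_le_two.trans hx)
    have := abs_stirlingRemainder_add_sub_le (Nat.le_floor (by exact_mod_cast hx))
      (sub_nonneg.2 hfx) (by linarith [Nat.lt_floor_add_one x])
    rwa [add_sub_cancel] at this
  simpa using hdiff.add (tendsto_stirlingRemainder_nat.comp hfloor)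

lemma tendsto_add_mul_log_one_add_div (α β : ℝ) :
    Tendsto (fun y => (y + β) * log (1 + α / y)) atTop (𝓝 α) := by
  have hlog : Tendsto (fun y => log (1 + α / y)) atTop (𝓝 0) := by
    have h₀ : Tendsto (fun y : ℝ => α / y) atTop (𝓝 0) := tendsto_const_nhds.div_atTop tendsto_id
    have h₁ : Tendsto (fun y => 1 + α / y) atTop (𝓝 1) := by simpa using h₀.const_add 1
    simpa [Function.comp_def] using (continuousAt_log one_ne_zero).tendsto.comp h₁
  simpa [add_mul] using (tendsto_mul_log_one_add_div_atTop α).add (hlog.const_mul β)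

lemma tendsto_shiftedStirlingRemainder (α : ℝ) :
    Tendsto (shiftedStirlingRemainder α) atTop (𝓝 0) := by
  have h := (tendsto_stirlingRemainder.comp (tendsto_atTop_add_const_left _ α tendsto_id)).add
    ((tendsto_add_mul_log_one_add_div α (α - 1 / 2)).sub_const α)
  rw [zero_add, sub_self] at h
  refine h.congr' ?_
  filter_upwards [eventually_gt_atTop 0, eventually_gt_atTop (-α)] with y hy hαy
  rw [Function.comp_apply, id, stirlingRemainder, shiftedStirlingRemainder,
    one_add_div hy.ne', add_comm y α, log_div (by linarith) hy.ne']
  ring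

lemma G_div_eq_exp {a c ε lam : ℝ} (hε : 1 < ε) (hlam : 0 < lam) (h₁ : 0 < c + lam)
    (h₂ : 0 < 1 + a - c + (ε - 1) * lam) (h₃ : 0 < a + ε * lam) :
    G a c ε lam / (√(2 * π * lam) * ε ^ ((1 : ℝ) / 2 - a - ε * lam) *
        (ε - 1) ^ ((1 : ℝ) / 2 + a - c + (ε - 1) * lam)) =
      exp (shiftedStirlingRemainder c lam + shiftedStirlingRemainder (1 + a - c) ((ε - 1) * lam) -
        shiftedStirlingRemainder a (ε * lam)) := by
  have hε₀ : 0 < ε := by linarith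
  have hε₁ : 0 < ε - 1 := by linarith
  have hΓ₁ := Gamma_pos_of_pos h₁
  have hΓ₂ := Gamma_pos_of_pos h₂
  have hΓ₃ := Gamma_pos_of_pos h₃
  have hsqrt : 0 < √(2 * π * lam) := by positivity
  have hpow₁ : 0 < ε ^ ((1 : ℝ) / 2 - a - ε * lam) := by positivity
  have hpow₂ : 0 < (ε - 1) ^ ((1 : ℝ) / 2 + a - c + (ε - 1) * lam) := by positivity
  refine (exp_log ?_).symm.trans (congrArg exp ?_)
  · unfold G; positivity
  rw [G, log_div (by positivity) (by positivity),
    log_div (by positivity) hΓ₃.ne', log_mul hΓ₁.ne' hΓ₂.ne', log_mul (by positivity) hpow₂.ne',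
    log_mul hsqrt.ne' hpow₁.ne', log_sqrt (by positivity), log_rpow hε₀, log_rpow hε₁,
    log_mul (by positivity) hlam.ne']
  unfold shiftedStirlingRemainder
  rw [log_mul hε₁.ne' hlam.ne', log_mul hε₀.ne' hlam.ne']
  ring

/-- As λ → +∞, G(λ) is asymptotically equivalent to
    √(2πλ)·ε^{1/2−a−ελ}·(ε−1)^{1/2+a−c+(ε−1)λ}. -/
theorem stmt_0 (a c ε : ℝ) (hε : 1 < ε) :
    Tendsto (fun lam : ℝ =>
        G a c ε lam /
          (Real.sqrt (2 * Real.pi * lam) * ε ^ ((1 : ℝ) / 2 - a - ε * lam) *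
            (ε - 1) ^ ((1 : ℝ) / 2 + a - c + (ε - 1) * lam)))
      atTop (nhds 1) := by
  have hε₀ : 0 < ε := by linarith
  have hε₁ : 0 < ε - 1 := by linarith
  have h := ((tendsto_shiftedStirlingRemainder c).add
    ((tendsto_shiftedStirlingRemainder (1 + a - c)).comp (tendsto_id.const_mul_atTop hε₁))).sub
    ((tendsto_shiftedStirlingRemainder a).comp (tendsto_id.const_mul_atTop hε₀))
  rw [add_zero, sub_zero] at h
  have hexp := (continuous_exp.tendsto 0).comp h
  rw [exp_zero] at hexp
  refine hexp.congr' ?_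
  have h₁ := tendsto_atTop_add_const_left _ c tendsto_id
  have h₂ := tendsto_atTop_add_const_left _ (1 + a - c) (tendsto_id.const_mul_atTop hε₁)
  have h₃ := tendsto_atTop_add_const_left _ a (tendsto_id.const_mul_atTop hε₀)
  filter_upwards [eventually_gt_atTop 0, h₁.eventually_gt_atTop 0, h₂.eventually_gt_atTop 0,
    h₃.eventually_gt_atTop 0] with lam hlam hpos₁ hpos₂ hpos₃
  exact (G_div_eq_exp hε hlam hpos₁ hpos₂ hpos₃).symm
end

section
/- Let a, c ∈ ℝ, ε > 1 and 0 < x < 1/ε. Then F_1(λ;x) = Σ_{n=0}^∞ (a+ελ)_n/((c+λ)_n)·x^n tends to 1/(1−εx) as λ → +∞. -/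
open Real Filter

/-- The Pochhammer symbol (rising factorial) (q)_n for real q. -/
noncomputable def poch (q : ℝ) (n : ℕ) : ℝ := (ascPochhammer ℝ n).eval q

/-- F_1(λ;x) := Σ_{n=0}^∞ (a+ελ)_n/((c+λ)_n) · x^n, the Gauss hypergeometric
    function F(a+ελ, 1; c+λ; x). -/
noncomputable def F1 (a c ε lam x : ℝ) : ℝ :=
  ∑' n : ℕ, poch (a + ε * lam) n / poch (c + lam) n * x ^ n

lemma poch_eq_prod (q : ℝ) (n : ℕ) : poch q n = ∏ i ∈ Finset.range n, (q + i) := by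
  induction n with
  | zero => simp [poch]
  | succ n ih => rw [poch, ascPochhammer_succ_eval, ← poch, ih, Finset.prod_range_succ]

/-- For 0 < x < 1/ε, F_1(λ;x) → 1/(1−εx) as λ → +∞. -/
theorem stmt_7 (a c ε x : ℝ) (hε : 1 < ε) (hx0 : 0 < x) (hx1 : x < 1 / ε) :
    Tendsto (fun lam : ℝ => F1 a c ε lam x) atTop (nhds (1 / (1 - ε * x))) := by
  have hεx : ε * x < 1 := by
    rw [lt_div_iff₀ (by linarith)] at hx1; linarith [hx1]
  have hεinv : ε < 1 / x := by
    rw [lt_div_iff₀ hx0]; linarith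
  set ε' : ℝ := (ε + 1 / x) / 2 with hε'
  have hεε' : ε < ε' := by rw [hε']; linarith
  have hε'1 : 1 < ε' := lt_trans hε hεε'
  have hε'x : ε' * x < 1 := by
    have : ε' < 1 / x := by rw [hε']; linarith
    calc ε' * x < (1/x) * x := by exact mul_lt_mul_of_pos_right this hx0
    _ = 1 := by field_simp
  have hε'x0 : 0 ≤ ε' * x := by positivity
  have key : Tendsto (fun lam : ℝ => ∑' n : ℕ,
      poch (a + ε * lam) n / poch (c + lam) n * x ^ n) atTop
      (nhds (∑' n : ℕ, (ε * x) ^ n)) := by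
    apply tendsto_tsum_of_dominated_convergence (bound := fun n => (ε' * x) ^ n)
      (summable_geometric_of_lt_one hε'x0 hε'x)
    · -- pointwise convergence
      intro n
      have heq : ∀ lam : ℝ, poch (a + ε * lam) n / poch (c + lam) n * x ^ n
          = (∏ k ∈ Finset.range n, ((a + ε * lam + k) / (c + lam + k))) * x ^ n := by
        intro lam
        rw [poch_eq_prod, poch_eq_prod, Finset.prod_div_distrib]
      simp only [heq]
      have hprod : Tendsto (fun lam : ℝ =>
          ∏ k ∈ Finset.range n, ((a + ε * lam + k) / (c + lam + k))) atTop
          (nhds (∏ _k ∈ Finset.range n, ε)) := by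
        apply tendsto_finset_prod
        intro k _
        have h1 : Tendsto (fun lam : ℝ => c + lam + (k:ℝ)) atTop atTop := by
          apply tendsto_atTop_add_const_right
          exact tendsto_atTop_add_const_left _ _ tendsto_id
        have h2 : Tendsto (fun lam : ℝ => ε + (a + k - ε * (c + k)) / (c + lam + k))
            atTop (nhds ε) := by
          have := (tendsto_const_nhds (x := (a + (k:ℝ) - ε * (c + k)))).div_atTop h1
          simpa using (tendsto_const_nhds (x := ε)).add this
        apply h2.congr'
        filter_upwards [eventually_gt_atTop (-(c + (k:ℝ)))] with lam hlam
        have hd : c + lam + (k:ℝ) ≠ 0 := ne_of_gt (by linarith)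
        field_simp
        ring
      have := hprod.mul_const (x ^ n)
      simp only [Finset.prod_const, Finset.card_range] at this
      rw [mul_pow]
      exact this
    · -- bound
      filter_upwards [eventually_ge_atTop ((a - ε' * c) / (ε' - ε)),
        eventually_gt_atTop (-c), eventually_ge_atTop (-a / ε)] with lam h1 h2 h3
      intro n
      have hcl : 0 < c + lam := by linarith
      have hal : 0 ≤ a + ε * lam := by
        have := (div_le_iff₀ (by linarith : (0:ℝ) < ε)).mp h3
        nlinarith
      have hlam : a - ε' * c ≤ (ε' - ε) * lam := by
        have := (div_le_iff₀ (by linarith : (0:ℝ) < ε' - ε)).mp h1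
        linarith
      have hterm : poch (a + ε * lam) n / poch (c + lam) n * x ^ n
          = (∏ k ∈ Finset.range n, ((a + ε * lam + k) / (c + lam + k))) * x ^ n := by
        rw [poch_eq_prod, poch_eq_prod, Finset.prod_div_distrib]
      rw [hterm]
      have hfac0 : ∀ k ∈ Finset.range n, 0 ≤ (a + ε * lam + k) / (c + lam + k) := by
        intro k _
        apply div_nonneg
        · have : (0:ℝ) ≤ (k:ℝ) := Nat.cast_nonneg k; linarith
        · have : (0:ℝ) ≤ (k:ℝ) := Nat.cast_nonneg k; linarith
      have hfacle : ∀ k ∈ Finset.range n, (a + ε * lam + k) / (c + lam + k) ≤ ε' := by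
        intro k _
        rw [div_le_iff₀ (by have : (0:ℝ) ≤ (k:ℝ) := Nat.cast_nonneg k; linarith)]
        have hk : (0:ℝ) ≤ (k:ℝ) := Nat.cast_nonneg k
        nlinarith
      have hp0 : 0 ≤ ∏ k ∈ Finset.range n, ((a + ε * lam + k) / (c + lam + k)) :=
        Finset.prod_nonneg hfac0
      have hple : (∏ k ∈ Finset.range n, ((a + ε * lam + k) / (c + lam + k))) ≤ ε' ^ n := by
        calc (∏ k ∈ Finset.range n, ((a + ε * lam + k) / (c + lam + k)))
            ≤ ∏ _k ∈ Finset.range n, ε' := Finset.prod_le_prod hfac0 hfacle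
          _ = ε' ^ n := by simp
      rw [Real.norm_eq_abs, abs_of_nonneg (by positivity), mul_pow]
      exact mul_le_mul_of_nonneg_right hple (by positivity)
  rw [tsum_geometric_of_lt_one (by positivity) hεx, ← one_div] at key
  exact key
end

section
/- Let a, c ∈ ℝ, ε > 1 and 1/ε < x < 1, and set α := 1/x (so 1 < α < ε). Then, as λ → +∞, F_1(λ;x) is asymptotically equivalent to G(λ)·α^{a+ελ}·(α−1)^{c−a−1−(ε−1)λ}; that is, the quotient of the two sides tends to 1. (This is the leading behaviour in the supercritical regime εx > 1, where the residue contribution from the pole dominates.) -/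
open Real Filter

section Stmt8Aux
variable {A C : ℝ}

lemma poch_zero (q : ℝ) : poch q 0 = 1 := by simp [poch]

lemma poch_succ (q : ℝ) (n : ℕ) : poch q (n+1) = poch q n * (q + n) := by
  simp [poch, ascPochhammer_succ_right]

lemma poch_pos {q : ℝ} (hq : 0 < q) (n : ℕ) : 0 < poch q n := by
  induction n with
  | zero => simp [poch_zero]
  | succ n ih => rw [poch_succ]; positivity

noncomputable def cc (A C : ℝ) (n : ℕ) : ℝ := poch A n / poch C n

lemma cc_zero (A C : ℝ) : cc A C 0 = 1 := by simp [cc, poch_zero]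

lemma cc_pos {A C : ℝ} (hA : 0 < A) (hC : 0 < C) (n : ℕ) : 0 < cc A C n :=
  div_pos (poch_pos hA n) (poch_pos hC n)

lemma cc_succ {A C : ℝ} (hA : 0 < A) (hC : 0 < C) (n : ℕ) :
    cc A C (n+1) = cc A C n * ((A + n) / (C + n)) := by
  rw [cc, cc, poch_succ, poch_succ]
  have h1 : poch C n ≠ 0 := (poch_pos hC n).ne'
  have h2 : (C:ℝ) + n ≠ 0 := by positivity
  field_simp

lemma cc_rec {A C : ℝ} (hA : 0 < A) (hC : 0 < C) (n : ℕ) :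
    cc A C (n+1) * (C + n) = cc A C n * (A + n) := by
  rw [cc_succ hA hC]
  have h : (C : ℝ) + n ≠ 0 := by positivity
  field_simp

lemma cc_bound {A C : ℝ} (hC : 1 ≤ C) (hCA : C ≤ A) (m : ℕ) (hm : A - C ≤ m) (n : ℕ) :
    cc A C n ≤ ((n : ℝ) + 1) ^ m := by
  have hC0 : (0:ℝ) < C := lt_of_lt_of_le one_pos hC
  have hA0 : (0:ℝ) < A := lt_of_lt_of_le hC0 hCA
  induction n with
  | zero => simp [cc_zero]
  | succ n ih =>
    rw [cc_succ hA0 hC0]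
    have hn1 : (0:ℝ) < (n:ℝ) + 1 := by positivity
    have hCn : (0:ℝ) < C + n := by positivity
    have h1 : (A + n) / (C + n) ≤ 1 + (m : ℝ) / ((n:ℝ)+1) := by
      rw [div_le_iff₀ hCn]
      have hle : (n:ℝ) + 1 ≤ C + n := by linarith
      have hmn : (0:ℝ) ≤ (m:ℝ) := Nat.cast_nonneg m
      have hkey : (m:ℝ) ≤ (m:ℝ) * (C + n) / ((n:ℝ)+1) := by
        rw [le_div_iff₀ hn1]
        nlinarith
      have hexp : (1 + (m:ℝ)/((n:ℝ)+1)) * (C + n) = (C + n) + (m:ℝ)*(C+n)/((n:ℝ)+1) := by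
        ring
      rw [hexp]
      linarith
    have h3 : 1 + (m : ℝ) / ((n:ℝ)+1) ≤ (1 + 1/((n:ℝ)+1)) ^ m := by
      have h0 : (0:ℝ) ≤ 1/((n:ℝ)+1) := by positivity
      have hge : (-2:ℝ) ≤ 1/((n:ℝ)+1) := by linarith
      have := one_add_mul_le_pow hge m
      calc 1 + (m:ℝ)/((n:ℝ)+1) = 1 + (m:ℝ) * (1/((n:ℝ)+1)) := by ring
      _ ≤ _ := this
    have h4 : ((n:ℝ)+1)^m * (1 + 1/((n:ℝ)+1))^m = ((n:ℝ)+2)^m := by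
      rw [← mul_pow]
      field_simp
      ring
    have hccn : 0 < cc A C n := cc_pos hA0 hC0 n
    have hfrac : 0 ≤ (A + n) / (C + n) := by positivity
    calc cc A C n * ((A + n) / (C + n)) ≤ ((n:ℝ)+1)^m * ((1 + (m : ℝ) / ((n:ℝ)+1))) := by
          apply mul_le_mul ih h1 hfrac (by positivity)
    _ ≤ ((n:ℝ)+1)^m * (1 + 1/((n:ℝ)+1))^m := by
          apply mul_le_mul_of_nonneg_left h3 (by positivity)
    _ = ((n:ℝ)+2)^m := h4
    _ = (((n+1:ℕ):ℝ)+1)^m := by push_cast; ring_nf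

lemma summable_aux (p : ℕ) {q : ℝ} (h0 : 0 < q) (h1 : q < 1) :
    Summable (fun n : ℕ => ((n : ℝ) + 1) ^ p * q ^ n) := by
  have hq : ‖q‖ < 1 := by rw [Real.norm_eq_abs, abs_of_nonneg h0.le]; exact h1
  have h := summable_pow_mul_geometric_of_norm_lt_one p hq
  have h2 : Summable (fun n : ℕ => ((n+1 : ℕ) : ℝ) ^ p * q ^ (n+1)) :=
    (summable_nat_add_iff 1).2 h
  have h3 := h2.mul_left q⁻¹
  apply h3.congr
  intro n
  push_cast
  field_simp
  ring

lemma cc_le (hC : 1 ≤ C) (hCA : C ≤ A) (n : ℕ) :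
    |cc A C n| ≤ ((n:ℝ)+1) ^ ⌈A - C⌉₊ := by
  have hC0 : (0:ℝ) < C := lt_of_lt_of_le one_pos hC
  have hA0 : (0:ℝ) < A := lt_of_lt_of_le hC0 hCA
  rw [abs_of_nonneg (cc_pos hA0 hC0 n).le]
  exact cc_bound hC hCA _ (Nat.le_ceil _) n

lemma summable_cc (hC : 1 ≤ C) (hCA : C ≤ A) (d : ℝ) {y : ℝ} (h0 : 0 < y) (h1 : y < 1) :
    Summable (fun n : ℕ => cc A C n * (((n:ℝ) + d) * y ^ n)) := by
  set m := ⌈A - C⌉₊ with hm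
  apply Summable.of_norm_bounded (((summable_aux (m+1) h0 h1).mul_left (1 + |d|)))
  intro n
  have hb := cc_le hC hCA n
  have hyn : (0:ℝ) ≤ y ^ n := by positivity
  rw [Real.norm_eq_abs, abs_mul, abs_mul, abs_of_nonneg hyn]
  have h4 : |(n:ℝ) + d| ≤ (1 + |d|) * ((n:ℝ)+1) := by
    have := abs_add_le (n:ℝ) d
    rw [abs_of_nonneg (Nat.cast_nonneg n : (0:ℝ) ≤ n)] at this
    nlinarith [abs_nonneg d, Nat.cast_nonneg (α := ℝ) n]
  calc |cc A C n| * (|(n:ℝ) + d| * y ^ n)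
      ≤ ((n:ℝ)+1)^m * (((1 + |d|) * ((n:ℝ)+1)) * y ^ n) := by
        apply mul_le_mul hb (by nlinarith [abs_nonneg ((n:ℝ)+d)]) (by positivity) (by positivity)
    _ = (1 + |d|) * (((n:ℝ)+1)^(m+1) * y ^ n) := by ring

lemma summable_cc' (hC : 1 ≤ C) (hCA : C ≤ A) {y : ℝ} (h0 : 0 < y) (h1 : y < 1) :
    Summable (fun n : ℕ => cc A C n * y ^ n) := by
  set m := ⌈A - C⌉₊ with hm
  apply Summable.of_norm_bounded (summable_aux m h0 h1)
  intro n
  have hb := cc_le hC hCA n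
  have hyn : (0:ℝ) ≤ y ^ n := by positivity
  rw [Real.norm_eq_abs, abs_mul, abs_of_nonneg hyn]
  exact mul_le_mul_of_nonneg_right hb hyn

/-- termwise derivative series summable -/
lemma summable_cc_deriv (hC : 1 ≤ C) (hCA : C ≤ A) {y : ℝ} (h0 : 0 < y) (h1 : y < 1) :
    Summable (fun n : ℕ => cc A C n * ((n:ℝ) * y ^ (n-1))) := by
  have h := (summable_cc hC hCA 0 h0 h1).mul_left y⁻¹
  apply h.congr
  intro n
  cases n with
  | zero => simp
  | succ k =>
    have : (k+1) - 1 = k := rfl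
    rw [this]
    have : y ^ (k+1) = y * y ^ k := by ring
    rw [this]
    field_simp
    ring

/-- the series function -/
noncomputable def Fn (A C : ℝ) (y : ℝ) : ℝ := ∑' n : ℕ, cc A C n * y ^ n

lemma Fn_hasDerivAt (hC : 1 ≤ C) (hCA : C ≤ A) {y : ℝ} (h0 : 0 < y) (h1 : y < 1) :
    HasDerivAt (Fn A C) (∑' n : ℕ, cc A C n * ((n:ℝ) * y ^ (n-1))) y := by
  set r : ℝ := (1 + y) / 2 with hr
  have hr0 : 0 < r := by positivity
  have hr1 : r < 1 := by rw [hr]; linarith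
  have hyr : y < r := by rw [hr]; linarith
  set m := ⌈A - C⌉₊ with hm
  set u : ℕ → ℝ := fun n => ((n:ℝ)+1)^(m+1) * r ^ (n-1) with hu
  have husum : Summable u := by
    have h := (summable_aux (m+1) hr0 hr1).mul_left r⁻¹
    apply Summable.of_nonneg_of_le (fun n => by positivity) _ h
    intro n
    cases n with
    | zero =>
      simp only [hu]
      norm_num
      rw [one_le_inv_iff₀]
      exact ⟨hr0, hr1.le⟩
    | succ k =>
      simp only [hu]
      have h1' : (k+1) - 1 = k := rfl
      rw [h1']
      have : r ^ (k+1) = r * r ^ k := by ring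
      rw [this]
      apply le_of_eq
      field_simp
  have key := hasDerivAt_tsum_of_isPreconnected husum (isOpen_Ioo (a := -r) (b := r))
      (convex_Ioo _ _).isPreconnected
      (g := fun (n : ℕ) (z : ℝ) => cc A C n * z ^ n)
      (g' := fun (n : ℕ) (z : ℝ) => cc A C n * ((n:ℝ) * z ^ (n-1)))
      (fun n z hz => (hasDerivAt_pow n z).const_mul (cc A C n))
      ?_ (show (0:ℝ) ∈ Set.Ioo (-r) r by constructor <;> linarith) ?_
      (show y ∈ Set.Ioo (-r) r by constructor <;> linarith)
  · unfold Fn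
    exact key
  · intro n z hz
    have hz' : |z| ≤ r := by
      rw [abs_le]; exact ⟨hz.1.le, hz.2.le⟩
    rw [Real.norm_eq_abs, abs_mul, abs_mul]
    have h5 : |z ^ (n-1)| ≤ r ^ (n-1) := by
      rw [abs_pow]
      exact pow_le_pow_left₀ (abs_nonneg z) hz' _
    have hb := cc_le hC hCA n
    have hnn : |(n:ℝ)| ≤ (n:ℝ)+1 := by
      rw [abs_of_nonneg (Nat.cast_nonneg n : (0:ℝ) ≤ n)]; linarith
    calc |cc A C n| * (|(n:ℝ)| * |z ^ (n-1)|)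
        ≤ ((n:ℝ)+1)^m * (((n:ℝ)+1) * r ^ (n-1)) := by
          apply mul_le_mul hb _ (by positivity) (by positivity)
          apply mul_le_mul hnn h5 (abs_nonneg _) (by positivity)
      _ = u n := by simp only [hu]; ring
  · apply summable_of_ne_finset_zero (s := {0})
    intro n hn
    have : n ≠ 0 := by simpa using hn
    simp [zero_pow this]

lemma Fn_ode (hC : 1 ≤ C) (hCA : C ≤ A) {y : ℝ} (h0 : 0 < y) (h1 : y < 1) :
    y * (1 - y) * (∑' n : ℕ, cc A C n * ((n:ℝ) * y ^ (n-1)))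
      = ((1 - C) + A * y) * Fn A C y + (C - 1) := by
  have hC0 : (0:ℝ) < C := lt_of_lt_of_le one_pos hC
  have hA0 : (0:ℝ) < A := lt_of_lt_of_le hC0 hCA
  -- summabilities
  have S0 : Summable (fun n : ℕ => cc A C n * (((n:ℝ) + 0) * y ^ n)) :=
    summable_cc hC hCA 0 h0 h1
  have S3 : Summable (fun n : ℕ => cc A C n * ((n:ℝ) * y ^ n)) := by
    apply S0.congr; intro n; norm_num
  have S1 : Summable (fun n : ℕ => cc A C n * y ^ n) := summable_cc' hC hCA h0 h1
  have SCm : Summable (fun n : ℕ => cc A C n * (((n:ℝ) + (C-1)) * y ^ n)) :=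
    summable_cc hC hCA (C-1) h0 h1
  have SA : Summable (fun n : ℕ => cc A C n * (((n:ℝ) + A) * y ^ n)) :=
    summable_cc hC hCA A h0 h1
  -- step 1 : y * D = ∑ cc n * n * y^n
  have hyD : y * (∑' n : ℕ, cc A C n * ((n:ℝ) * y ^ (n-1)))
      = ∑' n : ℕ, cc A C n * ((n:ℝ) * y ^ n) := by
    rw [← tsum_mul_left]
    apply tsum_congr
    intro n
    cases n with
    | zero => simp
    | succ k =>
      have h1' : (k+1) - 1 = k := rfl
      rw [h1']
      have : y ^ (k+1) = y * y ^ k := by ring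
      rw [this]
      ring
  -- master identity : ∑ cc n (n + (C-1)) y^n = (C-1) + ∑ cc n (n + A) y^(n+1)
  have master : (∑' n : ℕ, cc A C n * (((n:ℝ) + (C-1)) * y ^ n))
      = (C - 1) + ∑' n : ℕ, cc A C n * (((n:ℝ) + A) * y ^ n) * y := by
    rw [SCm.tsum_eq_zero_add]
    congr 1
    · simp [cc_zero]
    · apply tsum_congr
      intro k
      have hrec := cc_rec hA0 hC0 k
      push_cast
      have : y ^ (k+1) = y ^ k * y := by ring
      rw [this]
      linear_combination (y ^ k * y) * hrec
  -- now assemble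
  have hsplit1 : (∑' n : ℕ, cc A C n * (((n:ℝ) + (C-1)) * y ^ n))
      = (∑' n : ℕ, cc A C n * ((n:ℝ) * y ^ n)) + (C - 1) * Fn A C y := by
    rw [Fn, ← tsum_mul_left, ← S3.tsum_add (S1.mul_left (C-1))]
    apply tsum_congr; intro n; ring
  have hsplit2 : (∑' n : ℕ, cc A C n * (((n:ℝ) + A) * y ^ n) * y)
      = y * (∑' n : ℕ, cc A C n * ((n:ℝ) * y ^ n)) + A * y * Fn A C y := by
    rw [Fn, ← tsum_mul_left, ← tsum_mul_left, ← (S3.mul_left y).tsum_add ((S1.mul_left (A*y)))]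
    apply tsum_congr; intro n; ring
  rw [mul_comm y (1-y), mul_assoc, hyD]
  rw [hsplit1, hsplit2] at master
  linarith [master]

/-- the Beta-type integrand -/
noncomputable def phi (A C : ℝ) (s : ℝ) : ℝ := s ^ (C - 2) * (1 - s) ^ (A - C)

lemma phi_cont (hC : 2 ≤ C) (hCA : C ≤ A) : Continuous (phi A C) := by
  have h1 : Continuous fun s : ℝ => s ^ (C - 2) := by
    rw [continuous_iff_continuousAt]
    intro s
    exact Real.continuousAt_rpow_const s (C-2) (Or.inr (by linarith))
  have h2 : Continuous fun s : ℝ => (1 - s) ^ (A - C) := by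
    rw [continuous_iff_continuousAt]
    intro s
    exact (Real.continuousAt_rpow_const (1-s) (A-C) (Or.inr (by linarith))).comp
      ((continuous_const.sub continuous_id).continuousAt)
  exact h1.mul h2

lemma phi_nonneg {s : ℝ} (h0 : 0 ≤ s) (h1 : s ≤ 1) : 0 ≤ phi A C s := by
  unfold phi
  have := Real.rpow_nonneg h0 (C-2)
  have := Real.rpow_nonneg (by linarith : (0:ℝ) ≤ 1 - s) (A-C)
  positivity

noncomputable def J (A C : ℝ) (y : ℝ) : ℝ := ∫ s in (0:ℝ)..y, phi A C s

lemma J_hasDerivAt (hC : 2 ≤ C) (hCA : C ≤ A) (y : ℝ) :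
    HasDerivAt (J A C) (phi A C y) y := by
  apply intervalIntegral.integral_hasDerivAt_right
      ((phi_cont hC hCA).intervalIntegrable _ _)
      ((phi_cont hC hCA).stronglyMeasurableAtFilter _ _)
      (phi_cont hC hCA).continuousAt

lemma J_nonneg (hC : 2 ≤ C) (hCA : C ≤ A) {y : ℝ} (hy : 0 ≤ y) (hy1 : y ≤ 1) : 0 ≤ J A C y := by
  apply intervalIntegral.integral_nonneg hy
  intro s hs
  exact phi_nonneg hs.1 (le_trans hs.2 hy1)

lemma phi_le_one (hC : 2 ≤ C) (hCA : C ≤ A) {s : ℝ} (h0 : 0 ≤ s) (h1 : s ≤ 1) :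
    phi A C s ≤ 1 := by
  unfold phi
  have e1 : s ^ (C-2) ≤ 1 := Real.rpow_le_one h0 h1 (by linarith)
  have e2 : (1-s) ^ (A-C) ≤ 1 := Real.rpow_le_one (by linarith) (by linarith) (by linarith)
  nlinarith [Real.rpow_nonneg h0 (C-2), Real.rpow_nonneg (by linarith : (0:ℝ) ≤ 1 - s) (A-C)]

lemma J_le (hC : 2 ≤ C) (hCA : C ≤ A) {y : ℝ} (h0 : 0 ≤ y) (h1 : y ≤ 1) :
    J A C y ≤ y := by
  have := intervalIntegral.integral_mono_on h0
      ((phi_cont hC hCA).intervalIntegrable 0 y)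
      (intervalIntegrable_const (c := (1:ℝ)) (μ := MeasureTheory.volume))
      (fun s hs => phi_le_one hC hCA hs.1 (le_trans hs.2 h1))
  simpa [J] using this

/-- the function H which is constant -/
noncomputable def HH (A C : ℝ) (y : ℝ) : ℝ :=
  y ^ (C-1) * (1-y) ^ (A+1-C) * Fn A C y - (C-1) * J A C y

lemma HH_hasDerivAt (hC : 2 ≤ C) (hCA : C ≤ A) {y : ℝ} (h0 : 0 < y) (h1 : y < 1) :
    HasDerivAt (HH A C) 0 y := by
  have h1y : (0:ℝ) < 1 - y := by linarith
  have hC1 : (1:ℝ) ≤ C := by linarith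
  -- derivative pieces
  have d1 : HasDerivAt (fun z : ℝ => z ^ (C-1)) ((C-1) * y ^ (C-2)) y := by
    have := Real.hasDerivAt_rpow_const (x := y) (p := C-1) (Or.inl h0.ne')
    convert this using 2
    ring_nf
  have d2 : HasDerivAt (fun z : ℝ => (1-z) ^ (A+1-C)) (-((A+1-C) * (1-y) ^ (A-C))) y := by
    have hin : HasDerivAt (fun z : ℝ => 1 - z) (-1) y := by
      simpa using (hasDerivAt_id y).const_sub 1
    have hout := Real.hasDerivAt_rpow_const (x := 1-y) (p := A+1-C) (Or.inl h1y.ne')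
    have := HasDerivAt.comp y hout hin
    refine this.congr_deriv ?_
    have : A + 1 - C - 1 = A - C := by ring
    rw [this]
    ring
  have dF := Fn_hasDerivAt hC1 hCA h0 h1
  have dJ := J_hasDerivAt hC hCA y
  set D := ∑' n : ℕ, cc A C n * ((n:ℝ) * y ^ (n-1)) with hD
  have dprod := (d1.mul d2).mul dF
  have dall := dprod.sub (dJ.const_mul (C-1))
  refine dall.congr_deriv (Eq.symm ?_)
  simp only [Pi.mul_apply]
  -- show 0 = the derivative expression
  have ode := Fn_ode hC1 hCA h0 h1
  have split1 : y ^ (C-1) = y ^ (C-2) * y := by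
    rw [← Real.rpow_add_one h0.ne' (C-2)]
    ring_nf
  have split2 : (1-y) ^ (A+1-C) = (1-y) ^ (A-C) * (1-y) := by
    rw [← Real.rpow_add_one h1y.ne' (A-C)]
    ring_nf
  rw [split1, split2]
  unfold phi
  linear_combination (- (y ^ (C-2) * (1-y) ^ (A-C))) * ode

lemma HH_const (hC : 2 ≤ C) (hCA : C ≤ A) {y x : ℝ} (hy : 0 < y) (hyx : y ≤ x) (hx : x < 1) :
    HH A C x = HH A C y := by
  have := constant_of_has_deriv_right_zero (f := HH A C) (a := y) (b := x)
    (fun z hz => (HH_hasDerivAt hC hCA (lt_of_lt_of_le hy hz.1)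
        (lt_of_le_of_lt hz.2 hx)).continuousAt.continuousWithinAt)
    (fun z hz => (HH_hasDerivAt hC hCA (lt_of_lt_of_le hy hz.1)
        (lt_trans hz.2 hx)).hasDerivWithinAt.mono (Set.subset_univ _) )
  exact this x ⟨hyx, le_refl x⟩

lemma Fn_mono_le (hC : 2 ≤ C) (hCA : C ≤ A) {y x : ℝ} (h0 : 0 < y) (hyx : y ≤ x) (hx : x < 1) :
    Fn A C y ≤ Fn A C x := by
  have hC1 : (1:ℝ) ≤ C := by linarith
  have hC0 : (0:ℝ) < C := by linarith
  have hA0 : (0:ℝ) < A := by linarith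
  apply Summable.tsum_le_tsum _ (summable_cc' hC1 hCA h0 (lt_of_le_of_lt hyx hx))
    (summable_cc' hC1 hCA (lt_of_lt_of_le h0 hyx) hx)
  intro n
  apply mul_le_mul_of_nonneg_left (pow_le_pow_left₀ h0.le hyx n) (cc_pos hA0 hC0 n).le

lemma Fn_nonneg (hC : 2 ≤ C) (hCA : C ≤ A) {y : ℝ} (h0 : 0 < y) (h1 : y < 1) :
    0 ≤ Fn A C y := by
  have hC0 : (0:ℝ) < C := by linarith
  have hA0 : (0:ℝ) < A := by linarith
  apply tsum_nonneg
  intro n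
  exact mul_nonneg (cc_pos hA0 hC0 n).le (pow_nonneg h0.le n)

lemma HH_zero (hC : 2 ≤ C) (hCA : C ≤ A) {x : ℝ} (h0 : 0 < x) (h1 : x < 1) :
    HH A C x = 0 := by
  set M := Fn A C x + (C - 1) with hM
  have hM0 : 0 < M := by
    have := Fn_nonneg hC hCA h0 h1
    rw [hM]; linarith
  have key : ∀ y : ℝ, 0 < y → y ≤ x → |HH A C x| ≤ y * M := by
    intro y hy hyx
    rw [HH_const hC hCA hy hyx h1]
    have hy1 : y < 1 := lt_of_le_of_lt hyx h1
    have h1y : (0:ℝ) ≤ 1 - y := by linarith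
    have e1 : y ^ (C-1) ≤ y := by
      have := Real.rpow_le_rpow_of_exponent_ge hy hy1.le (by linarith : (1:ℝ) ≤ C - 1)
      rwa [Real.rpow_one] at this
    have e2 : (1-y) ^ (A+1-C) ≤ 1 := Real.rpow_le_one h1y (by linarith) (by linarith)
    have e3 : 0 ≤ Fn A C y := Fn_nonneg hC hCA hy hy1
    have e4 : Fn A C y ≤ Fn A C x := Fn_mono_le hC hCA hy hyx h1
    have e5 : 0 ≤ J A C y := J_nonneg hC hCA hy.le hy1.le
    have e6 : J A C y ≤ y := J_le hC hCA hy.le hy1.le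
    have e7 : (0:ℝ) ≤ y ^ (C-1) := Real.rpow_nonneg hy.le _
    have e8 : (0:ℝ) ≤ (1-y) ^ (A+1-C) := Real.rpow_nonneg h1y _
    have hup : HH A C y ≤ y * M := by
      unfold HH
      rw [hM]
      have : y ^ (C-1) * (1-y) ^ (A+1-C) * Fn A C y ≤ y * Fn A C x := by
        calc y ^ (C-1) * (1-y) ^ (A+1-C) * Fn A C y ≤ y * 1 * Fn A C x := by
              apply mul_le_mul (mul_le_mul e1 e2 e8 hy.le) e4 e3 (by positivity)
          _ = y * Fn A C x := by ring
      nlinarith [e5, mul_nonneg hy.le e5]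
    have hlo : -(y * M) ≤ HH A C y := by
      unfold HH
      rw [hM]
      have h9 : 0 ≤ y ^ (C-1) * (1-y) ^ (A+1-C) * Fn A C y := by positivity
      nlinarith [e6, hy.le]
    rw [abs_le]
    exact ⟨hlo, hup⟩
  -- conclude via limit y = x/(n+1)
  have hseq : Tendsto (fun n : ℕ => (x / ((n:ℝ)+1)) * M) atTop (nhds 0) := by
    have h := tendsto_one_div_add_atTop_nhds_zero_nat (𝕜 := ℝ)
    have := (h.const_mul x).mul_const M
    simpa using this.congr (fun n => by field_simp)
  have hbd : ∀ n : ℕ, |HH A C x| ≤ (x / ((n:ℝ)+1)) * M := by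
    intro n
    apply key
    · positivity
    · rw [div_le_iff₀ (by positivity : (0:ℝ) < (n:ℝ)+1)]
      nlinarith [Nat.cast_nonneg (α := ℝ) n]
  have := le_of_tendsto_of_tendsto' tendsto_const_nhds hseq hbd
  have habs : |HH A C x| ≤ 0 := this
  have := abs_nonneg (HH A C x)
  have : |HH A C x| = 0 := le_antisymm habs this
  exact abs_eq_zero.mp this

/-- the key identity -/
lemma Fn_eq (hC : 2 ≤ C) (hCA : C ≤ A) {x : ℝ} (h0 : 0 < x) (h1 : x < 1) :
    Fn A C x = (C-1) * x ^ (1-C) * (1-x) ^ (C-A-1) * J A C x := by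
  have hz := HH_zero hC hCA h0 h1
  unfold HH at hz
  have h1x : (0:ℝ) < 1 - x := by linarith
  have e1 : x ^ (1-C) * x ^ (C-1) = 1 := by
    rw [← Real.rpow_add h0]; norm_num
  have e2 : (1-x) ^ (C-A-1) * (1-x) ^ (A+1-C) = 1 := by
    rw [← Real.rpow_add h1x]
    have h : C-A-1+(A+1-C) = 0 := by ring
    rw [h, Real.rpow_zero]
  have hFn : x ^ (C-1) * (1-x) ^ (A+1-C) * Fn A C x = (C-1) * J A C x := by linarith
  calc Fn A C x = (x ^ (1-C) * x ^ (C-1)) * ((1-x) ^ (C-A-1) * (1-x) ^ (A+1-C)) * Fn A C x := by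
        rw [e1, e2]; ring
    _ = x ^ (1-C) * (1-x) ^ (C-A-1) * (x ^ (C-1) * (1-x) ^ (A+1-C) * Fn A C x) := by ring
    _ = x ^ (1-C) * (1-x) ^ (C-A-1) * ((C-1) * J A C x) := by rw [hFn]
    _ = (C-1) * x ^ (1-C) * (1-x) ^ (C-A-1) * J A C x := by ring

lemma real_beta {p q : ℝ} (hp : 0 < p) (hq : 0 < q) :
    ∫ s in (0:ℝ)..1, s ^ (p-1) * (1-s) ^ (q-1) = Real.Gamma p * Real.Gamma q / Real.Gamma (p+q) := by
  have hc := Complex.Gamma_mul_Gamma_eq_betaIntegral (s := (p:ℂ)) (t := (q:ℂ))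
    (by simpa using hp) (by simpa using hq)
  have hbeta : Complex.betaIntegral p q = ((∫ s in (0:ℝ)..1, s ^ (p-1) * (1-s) ^ (q-1) : ℝ) : ℂ) := by
    rw [Complex.betaIntegral]
    rw [← intervalIntegral.integral_ofReal]
    apply intervalIntegral.integral_congr
    intro s hs
    rw [Set.uIcc_of_le (by norm_num : (0:ℝ) ≤ 1)] at hs
    dsimp only
    rw [show ((p:ℂ) - 1) = ((p - 1 : ℝ) : ℂ) by push_cast; ring,
        show ((q:ℂ) - 1) = ((q - 1 : ℝ) : ℂ) by push_cast; ring,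
        show (1 - (s:ℂ)) = ((1 - s : ℝ) : ℂ) by push_cast; ring,
        ← Complex.ofReal_cpow hs.1, ← Complex.ofReal_cpow (by linarith [hs.2] : (0:ℝ) ≤ 1 - s)]
    push_cast
    ring
  rw [hbeta] at hc
  have hG : Real.Gamma (p+q) ≠ 0 := (Real.Gamma_pos_of_pos (by linarith)).ne'
  have hcr : ((Real.Gamma p * Real.Gamma q : ℝ) : ℂ)
      = ((Real.Gamma (p+q) * ∫ s in (0:ℝ)..1, s ^ (p-1) * (1-s) ^ (q-1) : ℝ) : ℂ) := by
    push_cast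
    rw [← Complex.Gamma_ofReal, ← Complex.Gamma_ofReal, ← Complex.Gamma_ofReal]
    push_cast
    rw [hc]
  have := Complex.ofReal_inj.mp hcr
  field_simp
  linarith [this]

lemma J_one (hC : 2 ≤ C) (hCA : C < A) :
    J A C 1 = Real.Gamma (C-1) * Real.Gamma (A-C+1) / Real.Gamma A := by
  have h := real_beta (p := C-1) (q := A-C+1) (by linarith) (by linarith)
  unfold J phi
  have e1 : C - 1 - 1 = C - 2 := by ring
  have e2 : A - C + 1 - 1 = A - C := by ring
  have e3 : C - 1 + (A - C + 1) = A := by ring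
  rw [e1, e2, e3] at h
  exact h

/-- pointwise bound of integrand on [x,1] under the peak condition -/
lemma phi_anti (hC : 2 ≤ C) (hCA : C < A) {x : ℝ} (h0 : 0 < x) (h1 : x < 1)
    (hpk : (C - 2) * (1 - x) < (A - C) * x) :
    ∀ s ∈ Set.Icc x 1, phi A C s ≤ phi A C x := by
  have hlog : ∀ t : ℝ, 0 < t → t < 1 →
      HasDerivAt (fun t => (C-2) * Real.log t + (A-C) * Real.log (1-t))
        ((C-2) / t - (A-C) / (1-t)) t := by
    intro t ht0 ht1
    have h1t : (0:ℝ) < 1 - t := by linarith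
    have d1 : HasDerivAt (fun t : ℝ => (C-2) * Real.log t) ((C-2) * t⁻¹) t :=
      (Real.hasDerivAt_log ht0.ne').const_mul (C-2)
    have d2 : HasDerivAt (fun t : ℝ => (A-C) * Real.log (1-t)) ((A-C) * ((1-t)⁻¹ * (-1))) t := by
      have hin : HasDerivAt (fun t : ℝ => 1 - t) (-1) t := by
        simpa using (hasDerivAt_id t).const_sub 1
      exact ((Real.hasDerivAt_log h1t.ne').comp t hin).const_mul (A-C)
    have := d1.add d2
    refine this.congr_deriv ?_
    field_simp
    ring
  intro s hs
  rcases eq_or_lt_of_le hs.2 with heq | hlt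
  · rw [heq]
    unfold phi
    rw [show (1:ℝ) - 1 = 0 by ring, Real.zero_rpow (sub_ne_zero.mpr hCA.ne')]
    rw [mul_zero]
    exact mul_nonneg (Real.rpow_nonneg h0.le _) (Real.rpow_nonneg (by linarith) _)
  · -- s < 1
    have hs0 : 0 < s := lt_of_lt_of_le h0 hs.1
    set h : ℝ → ℝ := fun t => (C-2) * Real.log t + (A-C) * Real.log (1-t) with hh
    have hanti : AntitoneOn h (Set.Icc x s) := by
      apply antitoneOn_of_deriv_nonpos (convex_Icc x s)
      · intro t ht
        exact (hlog t (lt_of_lt_of_le h0 ht.1) (lt_of_le_of_lt ht.2 hlt)).continuousAt.continuousWithinAt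
      · intro t ht
        rw [interior_Icc] at ht
        exact (hlog t (lt_trans h0 ht.1) (lt_trans ht.2 hlt)).differentiableAt.differentiableWithinAt
      · intro t ht
        rw [interior_Icc] at ht
        have ht0 : 0 < t := lt_trans h0 ht.1
        have ht1 : t < 1 := lt_trans ht.2 hlt
        have h1t : (0:ℝ) < 1 - t := by linarith
        rw [(hlog t ht0 ht1).deriv]
        rw [sub_nonpos, div_le_div_iff₀ ht0 h1t]
        nlinarith [hpk, ht.1, h0]
    have hxs : x ∈ Set.Icc x s := ⟨le_refl x, hs.1⟩
    have hss : s ∈ Set.Icc x s := ⟨hs.1, le_refl s⟩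
    have := hanti hxs hss hs.1
    have hrep : ∀ t : ℝ, 0 < t → t < 1 → phi A C t = Real.exp (h t) := by
      intro t ht0 ht1
      unfold phi
      rw [hh]
      simp only []
      rw [Real.rpow_def_of_pos ht0, Real.rpow_def_of_pos (by linarith : (0:ℝ) < 1 - t),
        ← Real.exp_add]
      ring_nf
    rw [hrep s hs0 hlt, hrep x h0 h1]
    exact Real.exp_le_exp.mpr this

lemma J_split (hC : 2 ≤ C) (hCA : C ≤ A) (x y : ℝ) :
    J A C x + (∫ s in x..y, phi A C s) = J A C y := by
  unfold J
  exact intervalIntegral.integral_add_adjacent_intervals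
    ((phi_cont hC hCA).intervalIntegrable _ _) ((phi_cont hC hCA).intervalIntegrable _ _)

lemma tail_le (hC : 2 ≤ C) (hCA : C < A) {x : ℝ} (h0 : 0 < x) (h1 : x < 1)
    (hpk : (C - 2) * (1 - x) < (A - C) * x) :
    J A C 1 - J A C x ≤ (1 - x) * phi A C x := by
  rw [← J_split hC hCA.le x 1]
  have hb := intervalIntegral.integral_mono_on h1.le
    ((phi_cont hC hCA.le).intervalIntegrable x 1)
    (intervalIntegrable_const (c := phi A C x) (μ := MeasureTheory.volume))
    (phi_anti hC hCA h0 h1 hpk)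
  simp only [intervalIntegral.integral_const, smul_eq_mul] at hb
  linarith [hb]

lemma J_lower (hC : 2 ≤ C) (hCA : C ≤ A) {s₀ s₁ : ℝ} (h0 : 0 < s₀) (h01 : s₀ ≤ s₁) (h11 : s₁ ≤ 1) :
    (s₁ - s₀) * (s₀ ^ (C-2) * (1 - s₁) ^ (A-C)) ≤ J A C 1 := by
  have hint : ∀ u v : ℝ, IntervalIntegrable (phi A C) MeasureTheory.volume u v :=
    fun u v => (phi_cont hC hCA).intervalIntegrable u v
  have e1 : J A C 1 = (∫ s in (0:ℝ)..s₀, phi A C s) + (∫ s in s₀..s₁, phi A C s)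
      + (∫ s in s₁..(1:ℝ), phi A C s) := by
    unfold J
    rw [intervalIntegral.integral_add_adjacent_intervals (hint 0 s₀) (hint s₀ s₁),
      intervalIntegral.integral_add_adjacent_intervals (hint 0 s₁) (hint s₁ 1)]
  have nn1 : 0 ≤ ∫ s in (0:ℝ)..s₀, phi A C s := by
    apply intervalIntegral.integral_nonneg h0.le
    intro s hs
    exact phi_nonneg hs.1 (le_trans hs.2 (le_trans h01 h11))
  have nn3 : 0 ≤ ∫ s in s₁..(1:ℝ), phi A C s := by
    apply intervalIntegral.integral_nonneg h11
    intro s hs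
    exact phi_nonneg (le_trans (le_trans h0.le h01) hs.1) hs.2
  have mid : (s₁ - s₀) * (s₀ ^ (C-2) * (1 - s₁) ^ (A-C)) ≤ ∫ s in s₀..s₁, phi A C s := by
    have hb := intervalIntegral.integral_mono_on h01
      (intervalIntegrable_const (c := s₀ ^ (C-2) * (1 - s₁) ^ (A-C)) (μ := MeasureTheory.volume))
      (hint s₀ s₁) ?_
    · rwa [intervalIntegral.integral_const, smul_eq_mul] at hb
    · intro s hs
      unfold phi
      have b1 : s₀ ^ (C-2) ≤ s ^ (C-2) := Real.rpow_le_rpow h0.le hs.1 (by linarith)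
      have b2 : (1-s₁) ^ (A-C) ≤ (1-s) ^ (A-C) :=
        Real.rpow_le_rpow (by linarith [hs.2] : (0:ℝ) ≤ 1 - s₁)
          (by linarith [hs.2] : 1 - s₁ ≤ 1 - s) (by linarith)
      exact mul_le_mul b1 b2 (Real.rpow_nonneg (by linarith [hs.2] : (0:ℝ) ≤ 1 - s₁) _)
        (Real.rpow_nonneg (le_trans h0.le hs.1) _)
  linarith [e1, nn1, nn3, mid]

lemma psi_lt {ε x s : ℝ} (hε : 1 < ε) (hs : 1/ε < s) (hsx : s < x) (hx2 : x < 1) :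
    Real.log x + (ε-1) * Real.log (1-x) < Real.log s + (ε-1) * Real.log (1-s) := by
  have hε0 : (0:ℝ) < ε := by linarith
  have hs0 : 0 < s := lt_trans (by positivity) hs
  have hder : ∀ t : ℝ, 1/ε < t → t < 1 →
      HasDerivAt (fun t => Real.log t + (ε-1) * Real.log (1-t)) (t⁻¹ - (ε-1) * (1-t)⁻¹) t := by
    intro t ht0' ht1
    have ht0 : 0 < t := lt_trans (by positivity) ht0'
    have h1t : (0:ℝ) < 1 - t := by linarith
    have d1 : HasDerivAt Real.log t⁻¹ t := Real.hasDerivAt_log ht0.ne'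
    have hin : HasDerivAt (fun t : ℝ => 1 - t) (-1) t := by
      simpa using (hasDerivAt_id t).const_sub 1
    have d2 := ((Real.hasDerivAt_log h1t.ne').comp t hin).const_mul (ε-1)
    have := d1.add d2
    refine this.congr_deriv ?_
    ring
  have hanti : StrictAntiOn (fun t => Real.log t + (ε-1) * Real.log (1-t)) (Set.Icc s x) := by
    apply strictAntiOn_of_deriv_neg (convex_Icc s x)
    · intro t ht
      exact (hder t (lt_of_lt_of_le hs ht.1) (lt_of_le_of_lt ht.2 hx2)).continuousAt.continuousWithinAt
    · intro t ht
      rw [interior_Icc] at ht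
      have ht0' : 1/ε < t := lt_trans hs ht.1
      have ht1 : t < 1 := lt_trans ht.2 hx2
      have ht0 : 0 < t := lt_trans (by positivity) ht0'
      have h1t : (0:ℝ) < 1 - t := by linarith
      rw [(hder t ht0' ht1).deriv]
      have hεt : 1 < ε * t := by
        rw [div_lt_iff₀ hε0] at ht0'
        linarith
      have e1 : t⁻¹ < (ε-1) * (1-t)⁻¹ := by
        rw [inv_eq_one_div, inv_eq_one_div, mul_div_assoc', div_lt_div_iff₀ ht0 h1t]
        nlinarith
      linarith
  have := hanti ⟨le_refl s, hsx.le⟩ ⟨hsx.le, le_refl x⟩ hsx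
  exact this



lemma main_eq (a c ε x lam : ℝ) (hx0 : 0 < x) (hx2 : x < 1)
    (h2C : 2 ≤ c + lam) (hACpos : 0 < a - c + (ε-1)*lam) :
    F1 a c ε lam x /
        (G a c ε lam * (1 / x) ^ (a + ε * lam) *
          (1 / x - 1) ^ (c - a - 1 - (ε - 1) * lam))
      = J (a+ε*lam) (c+lam) x / J (a+ε*lam) (c+lam) 1 := by
  set A := a + ε*lam with hA
  set C := c + lam with hC
  have hCA : C < A := by rw [hA, hC]; linarith
  have hC2 : 2 ≤ C := h2C
  have h1x : (0:ℝ) < 1 - x := by linarith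
  -- numerator
  have hnum : F1 a c ε lam x = (C-1) * x ^ (1-C) * (1-x) ^ (C-A-1) * J A C x := by
    have : F1 a c ε lam x = Fn A C x := by
      unfold F1 Fn cc
      rfl
    rw [this]
    exact Fn_eq hC2 hCA.le hx0 hx2
  -- denominator
  have hden : G a c ε lam * (1 / x) ^ (a + ε * lam) * (1 / x - 1) ^ (c - a - 1 - (ε - 1) * lam)
      = (C-1) * x ^ (1-C) * (1-x) ^ (C-A-1) * J A C 1 := by
    have e1 : c - a - 1 - (ε - 1) * lam = C - A - 1 := by rw [hA, hC]; ring
    have e2 : 1 + a - c + (ε - 1) * lam = A - C + 1 := by rw [hA, hC]; ring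
    have e3 : (1:ℝ)/x - 1 = (1-x)/x := by field_simp
    rw [e1, e3]
    unfold G
    rw [e2]
    rw [J_one hC2 hCA]
    have hGC : Real.Gamma C = (C-1) * Real.Gamma (C-1) := by
      have := Real.Gamma_add_one (s := C - 1) (by intro h; rw [sub_eq_zero] at h; linarith [hC2, h])
      rw [show C - 1 + 1 = C by ring] at this
      exact this
    rw [show Real.Gamma (c+lam) = Real.Gamma C by rw [hC],
        show a + ε * lam = A by rw [hA], hGC]
    have hinv : (1/x : ℝ) ^ A = (x ^ A)⁻¹ := by
      rw [one_div, Real.inv_rpow hx0.le]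
    have hsplit : x ^ (1-C) = (x ^ A)⁻¹ * (x ^ (C-A-1))⁻¹ := by
      rw [← Real.rpow_neg hx0.le, ← Real.rpow_neg hx0.le, ← Real.rpow_add hx0]
      congr 1
      ring
    rw [hinv, Real.div_rpow h1x.le hx0.le, hsplit]
    have t1 : (0:ℝ) < x ^ A := Real.rpow_pos_of_pos hx0 _
    have t2 : (0:ℝ) < x ^ (C-A-1) := Real.rpow_pos_of_pos hx0 _
    have hGA : (0:ℝ) < Real.Gamma A := Real.Gamma_pos_of_pos (by linarith)
    field_simp
  rw [hnum, hden]
  have hK : (C-1) * x ^ (1-C) * (1-x) ^ (C-A-1) ≠ 0 := by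
    have k1 : (0:ℝ) < C - 1 := by linarith
    have k2 : (0:ℝ) < x ^ (1-C) := Real.rpow_pos_of_pos hx0 _
    have k3 : (0:ℝ) < (1-x) ^ (C-A-1) := Real.rpow_pos_of_pos h1x _
    positivity
  rw [mul_assoc ((C-1) * x ^ (1-C)) _ (J A C x), mul_assoc ((C-1) * x ^ (1-C)) _ (J A C 1)]
  rw [← mul_assoc, ← mul_assoc]
  exact mul_div_mul_left _ _ hK

end Stmt8Aux

set_option maxHeartbeats 2000000 in
/-- In the supercritical regime 1/ε < x < 1, with α := 1/x,
    F_1(λ;x) ∼ G(λ)·α^{a+ελ}·(α−1)^{c−a−1−(ε−1)λ} as λ → +∞. -/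
theorem stmt_8 (a c ε x : ℝ) (hε : 1 < ε) (hx1 : 1 / ε < x) (hx2 : x < 1) :
    Tendsto (fun lam : ℝ =>
        F1 a c ε lam x /
          (G a c ε lam * (1 / x) ^ (a + ε * lam) *
            (1 / x - 1) ^ (c - a - 1 - (ε - 1) * lam)))
      atTop (nhds 1) := by
  have hε0 : (0:ℝ) < ε := by linarith
  have hx0 : 0 < x := lt_trans (by positivity) hx1
  have h1x : (0:ℝ) < 1 - x := by linarith
  -- choice of s₀ < s₁ < x
  set s₁ := (1/ε + x)/2 with hs₁def
  have hs1l : 1/ε < s₁ := by rw [hs₁def]; linarith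
  have hs1r : s₁ < x := by rw [hs₁def]; linarith
  have hs10 : 0 < s₁ := lt_trans (by positivity) hs1l
  have hs11 : s₁ < 1 := lt_trans hs1r hx2
  have h1s₁ : (0:ℝ) < 1 - s₁ := by linarith
  have hψ := psi_lt hε hs1l hs1r hx2
  set L := (Real.log x + (ε-1)*Real.log (1-x)) - (ε-1)*Real.log (1-s₁) with hL
  have hLlt : L < Real.log s₁ := by rw [hL]; linarith
  set s₀ := Real.exp ((L + Real.log s₁)/2) with hs₀def
  have hs00 : 0 < s₀ := Real.exp_pos _
  have hlogs0 : Real.log s₀ = (L + Real.log s₁)/2 := Real.log_exp _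
  have hs01 : s₀ < s₁ := by
    rw [hs₀def]
    nth_rewrite 2 [← Real.exp_log hs10]
    exact Real.exp_lt_exp.mpr (by linarith)
  have hkey : Real.log x + (ε-1)*Real.log (1-x) < Real.log s₀ + (ε-1)*Real.log (1-s₁) := by
    rw [hlogs0]
    rw [hL] at hLlt ⊢
    linarith
  set w1 := x/s₀ with hw1def
  set w2 := (1-x)/(1-s₁) with hw2def
  have hw1 : 0 < w1 := by rw [hw1def]; positivity
  have hw2 : 0 < w2 := by rw [hw2def]; positivity
  set ρ := w1 * w2^(ε-1) with hρdef
  have hρ0 : 0 < ρ := by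
    have := Real.rpow_pos_of_pos hw2 (ε-1)
    rw [hρdef]; positivity
  have hρlog : Real.log ρ < 0 := by
    rw [hρdef, Real.log_mul hw1.ne' (Real.rpow_pos_of_pos hw2 _).ne', Real.log_rpow hw2,
      hw1def, hw2def, Real.log_div hx0.ne' hs00.ne', Real.log_div h1x.ne' h1s₁.ne']
    nlinarith [hkey]
  have hρ1 : ρ < 1 := by
    rw [← Real.exp_log hρ0, ← Real.exp_zero]
    exact Real.exp_lt_exp.mpr hρlog
  set Kq := ((1-x)/(s₁-s₀)) * w1^(c-2) * w2^(a-c) with hKqdef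
  -- eventual conditions
  have hev : ∀ᶠ lam in atTop, (2 ≤ c + lam ∧ 0 < a-c+(ε-1)*lam
      ∧ (c+lam-2)*(1-x) < (a-c+(ε-1)*lam)*x) := by
    rw [eventually_atTop]
    have hεx : 0 < ε*x-1 := by
      rw [div_lt_iff₀ hε0] at hx1
      linarith
    refine ⟨max (2-c) (max ((c-a+1)/(ε-1)) (((c-2)*(1-x) - (a-c)*x)/(ε*x-1) + 1)), ?_⟩
    intro lam hlam
    have l1 : 2-c ≤ lam := le_trans (le_max_left _ _) hlam
    have l2 : (c-a+1)/(ε-1) ≤ lam := le_trans (le_trans (le_max_left _ _) (le_max_right _ _)) hlam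
    have l3 : ((c-2)*(1-x) - (a-c)*x)/(ε*x-1) + 1 ≤ lam :=
      le_trans (le_trans (le_max_right _ _) (le_max_right _ _)) hlam
    have hε1 : (0:ℝ) < ε - 1 := by linarith
    have m2 : c-a+1 ≤ lam*(ε-1) := by
      rw [div_le_iff₀ hε1] at l2
      linarith
    have m3 : (c-2)*(1-x) - (a-c)*x ≤ (lam-1)*(ε*x-1) := by
      have : ((c-2)*(1-x) - (a-c)*x)/(ε*x-1) ≤ lam - 1 := by linarith
      rw [div_le_iff₀ hεx] at this
      linarith
    have g2 : 0 < a-c+(ε-1)*lam := by nlinarith [m2]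
    have g3 : (c+lam-2)*(1-x) < (a-c+(ε-1)*lam)*x := by nlinarith [m3, hεx]
    exact ⟨by linarith, g2, g3⟩
  -- reduce to incomplete beta ratio
  have heq : ∀ᶠ lam in atTop,
      F1 a c ε lam x /
        (G a c ε lam * (1 / x) ^ (a + ε * lam) *
          (1 / x - 1) ^ (c - a - 1 - (ε - 1) * lam))
      = J (a+ε*lam) (c+lam) x / J (a+ε*lam) (c+lam) 1 :=
    hev.mono (fun lam h => main_eq a c ε x lam hx0 hx2 h.1 h.2.1)
  rw [tendsto_congr' heq]
  -- the bound function tends to 0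
  have hB : Tendsto (fun lam : ℝ => Kq * ρ^lam) atTop (nhds 0) := by
    have h1 : Tendsto (fun lam : ℝ => Real.log ρ * lam) atTop atBot :=
      (tendsto_const_mul_atBot_of_neg hρlog).mpr tendsto_id
    have h2 := Real.tendsto_exp_atBot.comp h1
    have h3 := h2.const_mul Kq
    rw [mul_zero] at h3
    apply h3.congr
    intro lam
    simp only [Function.comp_apply]
    rw [Real.rpow_def_of_pos hρ0]
  -- squeeze
  have hsq : Tendsto (fun lam : ℝ =>
      1 - J (a+ε*lam) (c+lam) x / J (a+ε*lam) (c+lam) 1) atTop (nhds 0) := by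
    apply tendsto_of_tendsto_of_tendsto_of_le_of_le' tendsto_const_nhds hB
    · -- lower: 0 ≤ 1 - Jx/J1
      apply hev.mono
      intro lam h
      set A := a + ε*lam
      set C := c + lam
      have hC2 : 2 ≤ C := h.1
      have hCA : C < A := by
        have := h.2.1
        simp only [A, C]
        linarith
      have hlow := J_lower (A := A) (C := C) hC2 hCA.le hs00 hs01.le hs11.le
      have hLBpos : 0 < (s₁-s₀) * (s₀^(C-2)*(1-s₁)^(A-C)) := by
        have := Real.rpow_pos_of_pos hs00 (C-2)
        have := Real.rpow_pos_of_pos h1s₁ (A-C)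
        have : 0 < s₁ - s₀ := by linarith
        positivity
      have hJ1pos : 0 < J A C 1 := lt_of_lt_of_le hLBpos hlow
      have htail : 0 ≤ J A C 1 - J A C x := by
        rw [← J_split hC2 hCA.le x 1]
        have : 0 ≤ ∫ s in x..(1:ℝ), phi A C s := by
          apply intervalIntegral.integral_nonneg hx2.le
          intro s hs
          exact phi_nonneg (le_trans hx0.le hs.1) hs.2
        linarith
      have : J A C x / J A C 1 ≤ 1 := by
        rw [div_le_one hJ1pos]
        linarith
      linarith
    · -- upper: 1 - Jx/J1 ≤ Kq * ρ^lam
      apply hev.mono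
      intro lam h
      set A := a + ε*lam with hAdef
      set C := c + lam with hCdef
      have hC2 : 2 ≤ C := h.1
      have hCA : C < A := by
        have := h.2.1
        simp only [A, C]
        linarith
      have hpk : (C-2)*(1-x) < (A-C)*x := by
        have h3 := h.2.2
        have e : A - C = a-c+(ε-1)*lam := by rw [hAdef, hCdef]; ring
        have e2 : C - 2 = c+lam-2 := by rw [hCdef]
        rw [e, e2]
        exact h3
      have hlow := J_lower (A := A) (C := C) hC2 hCA.le hs00 hs01.le hs11.le
      have hs0C : 0 < s₀^(C-2) := Real.rpow_pos_of_pos hs00 _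
      have hs1A : 0 < (1-s₁)^(A-C) := Real.rpow_pos_of_pos h1s₁ _
      have hds : 0 < s₁ - s₀ := by linarith
      have hLBpos : 0 < (s₁-s₀) * (s₀^(C-2)*(1-s₁)^(A-C)) := by positivity
      have hJ1pos : 0 < J A C 1 := lt_of_lt_of_le hLBpos hlow
      have htail := tail_le (A := A) (C := C) hC2 hCA hx0 hx2 hpk
      have hphix : 0 ≤ (1-x) * phi A C x := by
        have := phi_nonneg (A := A) (C := C) hx0.le hx2.le
        positivity
      have step1 : 1 - J A C x / J A C 1 = (J A C 1 - J A C x) / J A C 1 := by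
        field_simp
      have step2 : (J A C 1 - J A C x) / J A C 1
          ≤ ((1-x) * phi A C x) / ((s₁-s₀) * (s₀^(C-2)*(1-s₁)^(A-C))) := by
        apply div_le_div₀ hphix htail hLBpos hlow
      have step3 : ((1-x) * phi A C x) / ((s₁-s₀) * (s₀^(C-2)*(1-s₁)^(A-C)))
          = Kq * ρ^lam := by
        have q1 : (x:ℝ)^(C-2) / s₀^(C-2) = w1^(C-2) := by
          rw [hw1def, Real.div_rpow hx0.le hs00.le]
        have q2 : (1-x)^(A-C)/(1-s₁)^(A-C) = w2^(A-C) := by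
          rw [hw2def, Real.div_rpow h1x.le h1s₁.le]
        have q3 : w1^(C-2) = w1^(c-2) * w1^lam := by
          rw [← Real.rpow_add hw1]
          congr 1
          rw [hCdef]; ring
        have q4 : w2^(A-C) = w2^(a-c) * (w2^(ε-1))^lam := by
          rw [← Real.rpow_mul hw2.le, ← Real.rpow_add hw2]
          congr 1
          rw [hAdef, hCdef]; ring
        have q5 : ρ^lam = w1^lam * (w2^(ε-1))^lam := by
          rw [hρdef, Real.mul_rpow hw1.le (Real.rpow_pos_of_pos hw2 _).le]
        have hrhs : Kq * ρ^lam = ((1-x)/(s₁-s₀)) * (x^(C-2)/s₀^(C-2))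
            * ((1-x)^(A-C)/(1-s₁)^(A-C)) := by
          rw [hKqdef, q5]
          calc ((1-x)/(s₁-s₀)) * w1^(c-2) * w2^(a-c) * (w1^lam * (w2^(ε-1))^lam)
              = ((1-x)/(s₁-s₀)) * (w1^(c-2)*w1^lam) * (w2^(a-c)*(w2^(ε-1))^lam) := by ring
            _ = ((1-x)/(s₁-s₀)) * w1^(C-2) * w2^(A-C) := by rw [← q3, ← q4]
            _ = _ := by rw [← q1, ← q2]
        rw [hrhs]
        show ((1-x) * (x^(C-2) * (1-x)^(A-C))) / ((s₁-s₀) * (s₀^(C-2)*(1-s₁)^(A-C))) = _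
        field_simp
      calc 1 - J A C x / J A C 1 = (J A C 1 - J A C x) / J A C 1 := step1
        _ ≤ _ := step2
        _ = Kq * ρ^lam := step3
  have hone : Tendsto (fun lam : ℝ =>
      1 - (1 - J (a+ε*lam) (c+lam) x / J (a+ε*lam) (c+lam) 1)) atTop (nhds (1 - 0)) :=
    tendsto_const_nhds.sub hsq
  rw [sub_zero] at hone
  apply hone.congr
  intro lam
  ring
end

section
/- Let a, c ∈ ℝ and ε > 1. Then the leading coefficient of the uniform expansion has a removable singularity at coalescence: both one-sided limits lim_{α→ε⁺} [ f(ε)/(κ·(α−ε)) − f(α)/√(ψ(ε)−ψ(α)) ] and lim_{α→ε⁻} [ f(ε)/(κ·(α−ε)) + f(α)/√(ψ(ε)−ψ(α)) ] exist and both equal −(f(ε)/κ)·𝒟_0, where 𝒟_0 := (a−1)/ε + (c−a−1)/(ε−1) + ε/(3(ε−1)) − (ε−1)/(3ε). -/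
open Real Filter

/-- ψ(t) := (ε−1)·log(t−1) − ε·log t. -/
noncomputable def psi (ε t : ℝ) : ℝ := (ε - 1) * Real.log (t - 1) - ε * Real.log t

/-- f(t) := t^{a−1}·(t−1)^{c−a−1}. -/
noncomputable def f (a c t : ℝ) : ℝ := t ^ (a - 1) * (t - 1) ^ (c - a - 1)

open Topology

/-!
Put `h = α - ε` and `Δ(α) = ψ(ε) - ψ(α)`. The cubic Taylor expansion of `log (1 + x)` gives
`Δ = q h² + r h³ + o(h³)` with `q = κ² = 1/(2ε(ε-1))` and `r = 1/(3ε²) - 1/(3(ε-1)²)`. Hence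
`√Δ = |h| S(α)`, where `S = √(Δ/h²)` extends to a function differentiable at `ε` with `S(ε) = κ`
and `S'(ε) = r/(2κ)`. On either side of `ε` the expression in question is minus the difference
quotient of `f/S` at `ε`, so both one-sided limits equal `-(f/S)'(ε) = -(f'(ε) - f(ε) r/(2q))/κ`.
-/

theorem abs_log_one_add_sub_cubic_le {x : ℝ} (hx : |x| ≤ 1 / 2) :
    |log (1 + x) - (x - x ^ 2 / 2 + x ^ 3 / 3)| ≤ 2 * |x| ^ 4 := by
  have hx' : |-x| < 1 := by rw [abs_neg]; linarith
  have h := abs_log_sub_add_sum_range_le hx' 3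
  calc |log (1 + x) - (x - x ^ 2 / 2 + x ^ 3 / 3)|
      = |(∑ i ∈ Finset.range 3, (-x) ^ (i + 1) / (i + 1)) + log (1 - -x)| := by
        simp only [Finset.sum_range_succ, Finset.sum_range_zero, sub_neg_eq_add]
        congr 1; push_cast; ring
    _ ≤ |x| ^ 4 / (1 - |x|) := by simpa using h
    _ ≤ 2 * |x| ^ 4 := by
        rw [div_le_iff₀ (by linarith)]
        nlinarith [pow_nonneg (abs_nonneg x) 4]

theorem tendsto_log_one_add_sub_div_cube :
    Tendsto (fun x : ℝ => (log (1 + x) - x + x ^ 2 / 2) / x ^ 3) (𝓝[≠] 0) (𝓝 (1 / 3)) := by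
  rw [← tendsto_sub_nhds_zero_iff]
  refine squeeze_zero_norm' ?_ ((continuous_const.mul continuous_abs).tendsto' 0 0 (by simp)
    |>.mono_left nhdsWithin_le_nhds : Tendsto (fun x : ℝ => 2 * |x|) (𝓝[≠] 0) (𝓝 0))
  have hsmall : ∀ᶠ x : ℝ in 𝓝[≠] 0, |x| ≤ 1 / 2 :=
    nhdsWithin_le_nhds <| Filter.mem_of_superset
      (Metric.closedBall_mem_nhds 0 (by norm_num : (0:ℝ) < 1 / 2)) fun x hx => by simpa using hx
  filter_upwards [hsmall, self_mem_nhdsWithin] with x hx hx0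
  have hx0 : x ≠ 0 := hx0
  have key : (log (1 + x) - x + x ^ 2 / 2) / x ^ 3 - 1 / 3
      = (log (1 + x) - (x - x ^ 2 / 2 + x ^ 3 / 3)) / x ^ 3 := by
    field_simp; ring
  rw [Real.norm_eq_abs, key, abs_div, abs_pow, div_le_iff₀ (by positivity)]
  calc _ ≤ 2 * |x| ^ 4 := abs_log_one_add_sub_cubic_le hx
    _ = 2 * |x| * |x| ^ 3 := by ring

theorem tendsto_sub_div_nhdsNE {x₀ b : ℝ} (hb : b ≠ 0) :
    Tendsto (fun x => (x - x₀) / b) (𝓝[≠] x₀) (𝓝[≠] 0) := by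
  refine tendsto_nhdsWithin_of_tendsto_nhds_of_eventually_within _ ?_ ?_
  · exact ((continuous_sub_right x₀).div_const b).tendsto' x₀ 0 (by simp) |>.mono_left
      nhdsWithin_le_nhds
  · exact eventually_nhdsWithin_of_forall fun x hx => div_ne_zero (sub_ne_zero.2 hx) hb

theorem hasDerivAt_sub_mul_of_tendsto {R : ℝ → ℝ} {x₀ r : ℝ}
    (hR : Tendsto R (𝓝[≠] x₀) (𝓝 r)) : HasDerivAt (fun x => (x - x₀) * R x) r x₀ := by
  rw [hasDerivAt_iff_tendsto_slope]
  refine hR.congr' (eventually_nhdsWithin_of_forall fun x hx => ?_)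
  rw [slope_def_field, sub_self, zero_mul, sub_zero, mul_div_cancel_left₀ _ (sub_ne_zero.2 hx)]

/-- For `x ≠ x₀` this is `√(Δ x / (x - x₀)²)`; writing it through the cubic remainder of `Δ`
makes it take the value `√q` at `x₀` instead of the junk value `0`. -/
noncomputable def normalizedSqrt (Δ : ℝ → ℝ) (x₀ q x : ℝ) : ℝ :=
  √(q + (x - x₀) * ((Δ x - q * (x - x₀) ^ 2) / (x - x₀) ^ 3))

section normalizedSqrt

variable {Δ : ℝ → ℝ} {x₀ q r : ℝ}

theorem sqrt_eq_abs_mul_normalizedSqrt {x : ℝ} (hx : x ≠ x₀) :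
    √(Δ x) = |x - x₀| * normalizedSqrt Δ x₀ q x := by
  have hx : x - x₀ ≠ 0 := sub_ne_zero.2 hx
  have h : Δ x = (x - x₀) ^ 2 * (q + (x - x₀) * ((Δ x - q * (x - x₀) ^ 2) / (x - x₀) ^ 3)) := by
    field_simp; ring
  rw [normalizedSqrt, ← sqrt_sq_eq_abs, ← sqrt_mul (sq_nonneg _), ← h]

theorem hasDerivAt_normalizedSqrt (hq : 0 < q)
    (hΔ : Tendsto (fun x => (Δ x - q * (x - x₀) ^ 2) / (x - x₀) ^ 3) (𝓝[≠] x₀) (𝓝 r)) :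
    HasDerivAt (normalizedSqrt Δ x₀ q) (r / (2 * √q)) x₀ := by
  have h := ((hasDerivAt_sub_mul_of_tendsto hΔ).const_add q).sqrt (by simp [hq.ne'])
  rwa [sub_self, zero_mul, add_zero] at h

theorem normalizedSqrt_self : normalizedSqrt Δ x₀ q x₀ = √q := by
  simp [normalizedSqrt]

variable {g : ℝ → ℝ} {g' : ℝ}

theorem tendsto_slope_div_normalizedSqrt (hq : 0 < q) (hg : HasDerivAt g g' x₀)
    (hΔ : Tendsto (fun x => (Δ x - q * (x - x₀) ^ 2) / (x - x₀) ^ 3) (𝓝[≠] x₀) (𝓝 r)) :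
    Tendsto (fun x => (g x / normalizedSqrt Δ x₀ q x - g x₀ / √q) / (x - x₀)) (𝓝[≠] x₀)
      (𝓝 ((g' - g x₀ * r / (2 * q)) / √q)) := by
  have h := hasDerivAt_iff_tendsto_slope.1 <|
    hg.div (hasDerivAt_normalizedSqrt hq hΔ) (by rw [normalizedSqrt_self]; positivity)
  have hsq : √q ^ 2 = q := sq_sqrt hq.le
  convert h using 2 with x
  · rw [slope_def_field, Pi.div_apply, Pi.div_apply, normalizedSqrt_self]
  · rw [normalizedSqrt_self]
    field_simp
    rw [hsq]
    ring

theorem tendsto_div_sub_div_sqrt_nhdsGT (hq : 0 < q) (hg : HasDerivAt g g' x₀)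
    (hΔ : Tendsto (fun x => (Δ x - q * (x - x₀) ^ 2) / (x - x₀) ^ 3) (𝓝[≠] x₀) (𝓝 r)) :
    Tendsto (fun x => g x₀ / (√q * (x - x₀)) - g x / √(Δ x)) (𝓝[>] x₀)
      (𝓝 (-((g' - g x₀ * r / (2 * q)) / √q))) := by
  refine ((tendsto_slope_div_normalizedSqrt hq hg hΔ).neg.mono_left
    (nhdsWithin_mono _ fun x hx => ne_of_gt hx)).congr' ?_
  filter_upwards [self_mem_nhdsWithin] with x hx
  rw [sqrt_eq_abs_mul_normalizedSqrt (ne_of_gt hx), abs_of_pos (sub_pos.2 hx)]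
  have : x - x₀ ≠ 0 := sub_ne_zero.2 (ne_of_gt hx)
  field_simp
  ring

theorem tendsto_div_add_div_sqrt_nhdsLT (hq : 0 < q) (hg : HasDerivAt g g' x₀)
    (hΔ : Tendsto (fun x => (Δ x - q * (x - x₀) ^ 2) / (x - x₀) ^ 3) (𝓝[≠] x₀) (𝓝 r)) :
    Tendsto (fun x => g x₀ / (√q * (x - x₀)) + g x / √(Δ x)) (𝓝[<] x₀)
      (𝓝 (-((g' - g x₀ * r / (2 * q)) / √q))) := by
  refine ((tendsto_slope_div_normalizedSqrt hq hg hΔ).neg.mono_left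
    (nhdsWithin_mono _ fun x hx => ne_of_lt hx)).congr' ?_
  filter_upwards [self_mem_nhdsWithin] with x hx
  rw [sqrt_eq_abs_mul_normalizedSqrt (ne_of_lt hx), abs_of_neg (sub_neg.2 hx)]
  have : x - x₀ ≠ 0 := sub_ne_zero.2 (ne_of_lt hx)
  field_simp
  ring

end normalizedSqrt

theorem psi_self_sub_psi {ε α : ℝ} (hε : 1 < ε) (hα : 1 < α) :
    psi ε ε - psi ε α = ε * log (1 + (α - ε) / ε) - (ε - 1) * log (1 + (α - ε) / (ε - 1)) := by
  have hε₀ : ε ≠ 0 := by positivity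
  have hε₁ : ε - 1 ≠ 0 := sub_ne_zero.2 hε.ne'
  have e₁ : 1 + (α - ε) / ε = α / ε := by field_simp; ring
  have e₂ : 1 + (α - ε) / (ε - 1) = (α - 1) / (ε - 1) := by field_simp; ring
  rw [e₁, e₂, log_div (by linarith) (by linarith), log_div (by linarith) (by linarith), psi, psi]
  ring

theorem tendsto_psi_cubic_remainder {ε : ℝ} (hε : 1 < ε) :
    Tendsto (fun α => (psi ε ε - psi ε α - (2 * ε * (ε - 1))⁻¹ * (α - ε) ^ 2) / (α - ε) ^ 3)
      (𝓝[≠] ε) (𝓝 ((1 / 3) / ε ^ 2 - (1 / 3) / (ε - 1) ^ 2)) := by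
  have hε₀ : ε ≠ 0 := by positivity
  have hε₁ : ε - 1 ≠ 0 := sub_ne_zero.2 hε.ne'
  have hlog (b : ℝ) (hb : b ≠ 0) := (tendsto_log_one_add_sub_div_cube.comp
    (tendsto_sub_div_nhdsNE (x₀ := ε) hb)).div_const (b ^ 2)
  refine ((hlog ε hε₀).sub (hlog (ε - 1) hε₁)).congr' ?_
  filter_upwards [nhdsWithin_le_nhds (lt_mem_nhds hε), self_mem_nhdsWithin] with α hα hαε
  have hαε : α - ε ≠ 0 := sub_ne_zero.2 hαε
  simp only [Function.comp_apply]
  rw [psi_self_sub_psi hε hα]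
  field_simp
  ring

theorem hasDerivAt_f (a c : ℝ) {t : ℝ} (ht : 1 < t) :
    HasDerivAt (f a c) (f a c t * ((a - 1) / t + (c - a - 1) / (t - 1))) t := by
  have ht₀ : t ≠ 0 := by positivity
  have ht₁ : t - 1 ≠ 0 := sub_ne_zero.2 ht.ne'
  have h : HasDerivAt (f a c) _ t :=
    ((hasDerivAt_id' t).rpow_const (Or.inl ht₀)).mul
      (((hasDerivAt_id' t).sub_const 1).rpow_const (Or.inl ht₁))
  convert h using 1
  rw [f, rpow_sub_one ht₀ (a - 1), rpow_sub_one ht₁ (c - a - 1)]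
  field_simp

/-- The leading coefficient of the uniform expansion has a removable singularity
    at coalescence: with κ := 1/√(2ε(ε−1)) and
    𝒟₀ := (a−1)/ε + (c−a−1)/(ε−1) + ε/(3(ε−1)) − (ε−1)/(3ε), both one-sided limits
    of f(ε)/(κ(α−ε)) ∓ f(α)/√(ψ(ε)−ψ(α)) as α → ε± equal −(f(ε)/κ)·𝒟₀. -/
theorem stmt_14 (a c ε : ℝ) (hε : 1 < ε) :
    Tendsto (fun α : ℝ =>
        f a c ε / ((1 / Real.sqrt (2 * ε * (ε - 1))) * (α - ε)) -
          f a c α / Real.sqrt (psi ε ε - psi ε α))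
      (nhdsWithin ε (Set.Ioi ε))
      (nhds (-(f a c ε / (1 / Real.sqrt (2 * ε * (ε - 1)))) *
        ((a - 1) / ε + (c - a - 1) / (ε - 1) + ε / (3 * (ε - 1)) - (ε - 1) / (3 * ε)))) ∧
    Tendsto (fun α : ℝ =>
        f a c ε / ((1 / Real.sqrt (2 * ε * (ε - 1))) * (α - ε)) +
          f a c α / Real.sqrt (psi ε ε - psi ε α))
      (nhdsWithin ε (Set.Iio ε))
      (nhds (-(f a c ε / (1 / Real.sqrt (2 * ε * (ε - 1)))) *
        ((a - 1) / ε + (c - a - 1) / (ε - 1) + ε / (3 * (ε - 1)) - (ε - 1) / (3 * ε)))) := by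
  have hε₀ : ε ≠ 0 := by positivity
  have hε₁ : ε - 1 ≠ 0 := sub_ne_zero.2 hε.ne'
  set q := (2 * ε * (ε - 1))⁻¹ with hq_def
  have hq : 0 < q := inv_pos.2 (by nlinarith)
  have hκ : 1 / √(2 * ε * (ε - 1)) = √q := by rw [sqrt_inv, one_div]
  -- With `q = -ψ''(ε)/2` and `r = -ψ'''(ε)/6`, the correction `r / (2q)` is `ψ'''(ε)/(6ψ''(ε))`.
  have hD : -(f a c ε / √q) *
        ((a - 1) / ε + (c - a - 1) / (ε - 1) + ε / (3 * (ε - 1)) - (ε - 1) / (3 * ε)) =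
      -((f a c ε * ((a - 1) / ε + (c - a - 1) / (ε - 1)) -
        f a c ε * ((1 / 3) / ε ^ 2 - (1 / 3) / (ε - 1) ^ 2) / (2 * q)) / √q) := by
    rw [hq_def]
    field_simp
    ring
  rw [hκ, hD]
  exact ⟨tendsto_div_sub_div_sqrt_nhdsGT hq (hasDerivAt_f a c hε) (tendsto_psi_cubic_remainder hε),
    tendsto_div_add_div_sqrt_nhdsLT hq (hasDerivAt_f a c hε) (tendsto_psi_cubic_remainder hε)⟩
end
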